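/- arXiv:2604.20394 — 5 statements merged into one kernel-verified Lean document; each statement's English description precedes it below -/
import Mathlib

section
/- Let 0 ≤ j < j' ≤ N be two splits and let b = #{i : j < x_i ≤ j'} be the number of data points with feature value in (j, j']. Then |L(j') − L(j)| ≤ b·M²/m. -/
/-!
Moving the split from `j` to `j'` enlarges the left range and shrinks the right one by the same
block `B` of data points. Since the sample mean minimises the sum of squared deviations, adding
points to a range can only increase its SSE, and measuring the larger range against the old mean
shows that each added point raises it by at most `M²` (both the point and the old mean lie in
`[0, M]`). Hence both SSE changes lie in `[0, #B · M²]`, and so does the absolute value of their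
difference.
-/

open Finset

/-- Sum of squared errors of the data points whose feature value lies in the range `R`. -/
noncomputable def SSE (m : ℕ) (x : Fin m → ℕ) (y : Fin m → ℝ) (R : Finset ℕ) : ℝ :=
  let idx := Finset.univ.filter fun i => x i ∈ R
  if idx.Nonempty then
    (∑ i ∈ idx, (y i) ^ 2) - (∑ i ∈ idx, y i) ^ 2 / (idx.card : ℝ)
  else 0

/-- Mean squared loss of split `j ∈ {0,…,N}`. -/
noncomputable def L (m N : ℕ) (x : Fin m → ℕ) (y : Fin m → ℝ) (j : ℕ) : ℝ :=
  (1 / m : ℝ) * (SSE m x y (Finset.Icc 1 j) + SSE m x y (Finset.Icc (j + 1) N))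

noncomputable def sse {ι : Type*} (y : ι → ℝ) (s : Finset ι) : ℝ :=
  if s.Nonempty then (∑ i ∈ s, y i ^ 2) - (∑ i ∈ s, y i) ^ 2 / (#s : ℝ) else 0

section sse

variable {ι : Type*} (y : ι → ℝ)

lemma sum_sq_sub_eq (s : Finset ι) (c : ℝ) :
    ∑ i ∈ s, (y i - c) ^ 2 = (∑ i ∈ s, y i ^ 2) - 2 * c * (∑ i ∈ s, y i) + #s * c ^ 2 := by
  simp only [sub_sq, sum_add_distrib, sum_sub_distrib, sum_const, nsmul_eq_mul, ← sum_mul,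
    ← mul_sum]
  ring

lemma sse_le_sum_sq_sub (s : Finset ι) (c : ℝ) : sse y s ≤ ∑ i ∈ s, (y i - c) ^ 2 := by
  unfold sse
  split_ifs with hs
  · have hcard : (0 : ℝ) < #s := by exact_mod_cast hs.card_pos
    rw [sum_sq_sub_eq, sub_le_iff_le_add, ← sub_nonneg]
    have hslack : (∑ i ∈ s, y i ^ 2) - 2 * c * (∑ i ∈ s, y i) + #s * c ^ 2 +
        (∑ i ∈ s, y i) ^ 2 / #s - ∑ i ∈ s, y i ^ 2 = (#s * c - ∑ i ∈ s, y i) ^ 2 / #s := by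
      field_simp
      ring
    rw [hslack]
    positivity
  · positivity

lemma sse_eq_sum_sq_sub_mean {s : Finset ι} (hs : s.Nonempty) :
    sse y s = ∑ i ∈ s, (y i - (∑ j ∈ s, y j) / #s) ^ 2 := by
  have hcard : (0 : ℝ) < #s := by exact_mod_cast hs.card_pos
  rw [sum_sq_sub_eq, sse, if_pos hs]
  field_simp
  ring

lemma sse_nonneg (s : Finset ι) : 0 ≤ sse y s := by
  rcases s.eq_empty_or_nonempty with rfl | hs
  · simp [sse]
  · rw [sse_eq_sum_sq_sub_mean y hs]
    positivity

lemma sse_mono {s t : Finset ι} (hst : s ⊆ t) : sse y s ≤ sse y t := by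
  rcases s.eq_empty_or_nonempty with rfl | hs
  · simpa [sse] using sse_nonneg y t
  calc sse y s ≤ ∑ i ∈ s, (y i - (∑ j ∈ t, y j) / #t) ^ 2 := sse_le_sum_sq_sub y s _
    _ ≤ ∑ i ∈ t, (y i - (∑ j ∈ t, y j) / #t) ^ 2 :=
        sum_le_sum_of_subset_of_nonneg hst fun _ _ _ => sq_nonneg _
    _ = sse y t := (sse_eq_sum_sq_sub_mean y (hs.mono hst)).symm

lemma sum_div_card_mem_Icc {s : Finset ι} (hs : s.Nonempty) {a b : ℝ}
    (hy : ∀ i ∈ s, y i ∈ Set.Icc a b) : (∑ i ∈ s, y i) / #s ∈ Set.Icc a b := by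
  have hcard : (0 : ℝ) < #s := by exact_mod_cast hs.card_pos
  constructor
  · rw [le_div_iff₀ hcard, mul_comm, ← nsmul_eq_mul]
    exact card_nsmul_le_sum s y a fun i hi => (hy i hi).1
  · rw [div_le_iff₀ hcard, mul_comm, ← nsmul_eq_mul]
    exact sum_le_card_nsmul s y b fun i hi => (hy i hi).2

lemma sse_le_add_card_sdiff_mul [DecidableEq ι] {s t : Finset ι} (hst : s ⊆ t) {a b : ℝ}
    (hy : ∀ i ∈ t, y i ∈ Set.Icc a b) : sse y t ≤ sse y s + #(t \ s) * (b - a) ^ 2 := by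
  rcases t.eq_empty_or_nonempty with rfl | ⟨i₀, hi₀⟩
  · simp [subset_empty.1 hst, sse]
  obtain ⟨c, hc, hsc⟩ : ∃ c ∈ Set.Icc a b, sse y s = ∑ i ∈ s, (y i - c) ^ 2 := by
    rcases s.eq_empty_or_nonempty with rfl | hs
    · exact ⟨y i₀, hy i₀ hi₀, by simp [sse]⟩
    · exact ⟨_, sum_div_card_mem_Icc y hs fun i hi => hy i (hst hi),
        sse_eq_sum_sq_sub_mean y hs⟩
  have hnew : ∑ i ∈ t \ s, (y i - c) ^ 2 ≤ #(t \ s) * (b - a) ^ 2 := by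
    rw [← nsmul_eq_mul]
    refine sum_le_card_nsmul _ _ _ fun i hi => ?_
    obtain ⟨hai, hib⟩ := hy i (sdiff_subset hi)
    nlinarith [hc.1, hc.2]
  calc sse y t ≤ ∑ i ∈ t, (y i - c) ^ 2 := sse_le_sum_sq_sub y t c
    _ = ∑ i ∈ t \ s, (y i - c) ^ 2 + sse y s := by rw [hsc, sum_sdiff hst]
    _ ≤ sse y s + #(t \ s) * (b - a) ^ 2 := by linarith

end sse

lemma SSE_eq_sse (m : ℕ) (x : Fin m → ℕ) (y : Fin m → ℝ) (R : Finset ℕ) :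
    SSE m x y R = sse y {i | x i ∈ R} := rfl

theorem loss_split_shift_general (m N : ℕ) (M : ℝ) (x : Fin m → ℕ) (y : Fin m → ℝ)
    (hy : ∀ i, y i ∈ Set.Icc (0 : ℝ) M)
    (j j' : ℕ) (hjj' : j < j') :
    |L m N x y j' - L m N x y j| ≤
      ((Finset.univ.filter fun i => j < x i ∧ x i ≤ j').card : ℝ) * M ^ 2 / m := by
  set B := univ.filter fun i => j < x i ∧ x i ≤ j'
  have hgrow {s t : Finset (Fin m)} (hst : s ⊆ t) (htB : t \ s ⊆ B) :
      sse y t - sse y s ∈ Set.Icc 0 (#B * M ^ 2) := by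
    have hup := sse_le_add_card_sdiff_mul y hst fun i _ => hy i
    have hcard : (#(t \ s) : ℝ) ≤ #B := by exact_mod_cast card_le_card htB
    rw [sub_zero] at hup
    constructor
    · linarith [sse_mono y hst]
    · linarith [mul_le_mul_of_nonneg_right hcard (sq_nonneg M)]
  have hleft := hgrow (s := {i | x i ∈ Icc 1 j}) (t := {i | x i ∈ Icc 1 j'})
    (by intro i; simp only [mem_filter, mem_univ, mem_Icc, true_and]; omega)
    (by intro i; simp only [mem_sdiff, mem_filter, mem_univ, mem_Icc, true_and, B]; omega)
  have hright := hgrow (s := {i | x i ∈ Icc (j' + 1) N}) (t := {i | x i ∈ Icc (j + 1) N})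
    (by intro i; simp only [mem_filter, mem_univ, mem_Icc, true_and]; omega)
    (by intro i; simp only [mem_sdiff, mem_filter, mem_univ, mem_Icc, true_and, B]; omega)
  have hdiff : L m N x y j' - L m N x y j = (1 / m : ℝ) *
      ((sse y {i | x i ∈ Icc 1 j'} - sse y {i | x i ∈ Icc 1 j}) -
        (sse y {i | x i ∈ Icc (j + 1) N} - sse y {i | x i ∈ Icc (j' + 1) N})) := by
    simp only [L, SSE_eq_sse]
    ring
  rw [hdiff, abs_mul, abs_of_nonneg (by positivity), one_div_mul_eq_div]
  exact div_le_div_of_nonneg_right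
    (abs_sub_le_of_nonneg_of_le hleft.1 hleft.2 hright.1 hright.2) (Nat.cast_nonneg m)

/-- Lipschitz property of the squared loss: if `b` data points have feature value in
`(j, j']`, then `|L(j') − L(j)| ≤ b·M²/m`. -/
theorem loss_split_shift (m N : ℕ) (hm : 1 ≤ m) (M : ℝ) (x : Fin m → ℕ) (y : Fin m → ℝ)
    (hx : ∀ i, x i ∈ Finset.Icc 1 N) (hy : ∀ i, y i ∈ Set.Icc (0 : ℝ) M)
    (j j' : ℕ) (hjj' : j < j') (hj'N : j' ≤ N) :
    |L m N x y j' - L m N x y j| ≤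
      ((Finset.univ.filter fun i => j < x i ∧ x i ≤ j').card : ℝ) * M ^ 2 / m :=
  loss_split_shift_general m N M x y hy j j' hjj'
end

section
/- Re-encode each label y_i ∈ {−1,+1} as z_i = (y_i+1)/2 ∈ {0,1}. Then for every split j ∈ {0,1,...,N}, L_Gini(j) = 2·L_MSE(j), where L_MSE(j) is the mean squared loss of split j computed on the re-encoded dataset (x_i, z_i). Consequently min_j L_Gini(j) = 2·min_j L_MSE(j), and the two objectives have the same set of minimizing splits. -/
open Finset

/-- Gini loss of a split `j ∈ {0,…,N}` for a dataset with labels in `{-1,+1}`;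
a child with no points contributes `0`. -/
noncomputable def giniLoss (m N : ℕ) (x : Fin m → ℕ) (y : Fin m → ℝ) (j : ℕ) : ℝ :=
  let a := ((Finset.univ.filter fun i => x i ∈ Finset.Icc 1 j ∧ y i = 1).card : ℝ)
  let b := ((Finset.univ.filter fun i => x i ∈ Finset.Icc 1 j ∧ y i = -1).card : ℝ)
  let c := ((Finset.univ.filter fun i => x i ∈ Finset.Icc (j + 1) N ∧ y i = 1).card : ℝ)
  let d := ((Finset.univ.filter fun i => x i ∈ Finset.Icc (j + 1) N ∧ y i = -1).card : ℝ)
  (1 / m : ℝ) * ((if a + b = 0 then 0 else 2 * a * b / (a + b)) +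
                 (if c + d = 0 then 0 else 2 * c * d / (c + d)))

/-- Mean squared loss of split `j ∈ {0,…,N}`. -/
noncomputable def mseLoss (m N : ℕ) (x : Fin m → ℕ) (y : Fin m → ℝ) (j : ℕ) : ℝ :=
  (1 / m : ℝ) * (SSE m x y (Finset.Icc 1 j) + SSE m x y (Finset.Icc (j + 1) N))

/-! With `0/1` labels `z`, a child holding `a` ones and `b` zeros has squared error
`a - a² / (a + b) = a b / (a + b)`, exactly half its Gini impurity `2 a b / (a + b)`. Scaling an
objective by `2` preserves its minimum up to that factor and its set of minimizers. -/

section BinaryVariance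

variable {ι : Type*} (s : Finset ι) {z : ι → ℝ}

theorem sum_eq_card_filter_eq_one_of_binary (hz : ∀ i ∈ s, z i = 0 ∨ z i = 1) :
    ∑ i ∈ s, z i = #{i ∈ s | z i = 1} := by
  rw [← Finset.sum_boole]
  refine Finset.sum_congr rfl fun i hi => ?_
  rcases hz i hi with h | h <;> simp [h]

theorem sum_sq_eq_sum_of_binary (hz : ∀ i ∈ s, z i = 0 ∨ z i = 1) :
    ∑ i ∈ s, z i ^ 2 = ∑ i ∈ s, z i :=
  Finset.sum_congr rfl fun i hi => by rcases hz i hi with h | h <;> simp [h]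

theorem card_eq_card_filter_eq_one_add_card_filter_eq_zero_of_binary
    (hz : ∀ i ∈ s, z i = 0 ∨ z i = 1) :
    #s = #{i ∈ s | z i = 1} + #{i ∈ s | z i = 0} := by
  rw [← Finset.card_filter_add_card_filter_not (fun i => z i = 1)]
  congr 2
  refine Finset.filter_congr fun i hi => ?_
  rcases hz i hi with h | h <;> simp [h]

-- For empty `s` both sides are `0` since `x / 0 = 0`.
theorem sum_sq_sub_sq_sum_div_card_of_binary (hz : ∀ i ∈ s, z i = 0 ∨ z i = 1) :
    (∑ i ∈ s, z i ^ 2) - (∑ i ∈ s, z i) ^ 2 / #s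
      = #{i ∈ s | z i = 1} * #{i ∈ s | z i = 0} / #s := by
  rw [sum_sq_eq_sum_of_binary s hz, sum_eq_card_filter_eq_one_of_binary s hz,
    card_eq_card_filter_eq_one_add_card_filter_eq_zero_of_binary s hz]
  set p : ℕ := #{i ∈ s | z i = 1}
  set q : ℕ := #{i ∈ s | z i = 0}
  rcases Nat.eq_zero_or_pos (p + q) with hpq | hpq
  · obtain ⟨hp, hq⟩ : p = 0 ∧ q = 0 := by omega
    simp [hp, hq]
  · have hpq' : ((p + q : ℕ) : ℝ) ≠ 0 := by positivity
    push_cast at hpq' ⊢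
    field_simp
    ring

end BinaryVariance

theorem SSE_eq (m : ℕ) (x : Fin m → ℕ) (y : Fin m → ℝ) (R : Finset ℕ) :
    SSE m x y R = (∑ i with x i ∈ R, y i ^ 2) - (∑ i with x i ∈ R, y i) ^ 2 / #{i | x i ∈ R} := by
  dsimp only [SSE]
  split_ifs with h
  · rfl
  · simp [Finset.not_nonempty_iff_eq_empty.mp h]

noncomputable def giniImpurity (m : ℕ) (x : Fin m → ℕ) (y : Fin m → ℝ) (R : Finset ℕ) : ℝ :=
  let a : ℝ := #{i | x i ∈ R ∧ y i = 1}
  let b : ℝ := #{i | x i ∈ R ∧ y i = -1}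
  if a + b = 0 then 0 else 2 * a * b / (a + b)

theorem giniLoss_eq (m N : ℕ) (x : Fin m → ℕ) (y : Fin m → ℝ) (j : ℕ) :
    giniLoss m N x y j
      = 1 / m * (giniImpurity m x y (Finset.Icc 1 j) + giniImpurity m x y (Finset.Icc (j + 1) N)) :=
  rfl

theorem giniImpurity_eq_two_mul_SSE (m : ℕ) (x : Fin m → ℕ) {y : Fin m → ℝ}
    (hy : ∀ i, y i = 1 ∨ y i = -1) (R : Finset ℕ) :
    giniImpurity m x y R = 2 * SSE m x (fun i => (y i + 1) / 2) R := by
  have hz : ∀ i ∈ ({i | x i ∈ R} : Finset (Fin m)), (y i + 1) / 2 = 0 ∨ (y i + 1) / 2 = 1 :=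
    fun i _ => by rcases hy i with h | h <;> norm_num [h]
  have hone : ∀ i, (y i + 1) / 2 = 1 ↔ y i = 1 := fun i => by
    constructor <;> intro h <;> linarith
  have hzero : ∀ i, (y i + 1) / 2 = 0 ↔ y i = -1 := fun i => by
    constructor <;> intro h <;> linarith
  rw [SSE_eq, sum_sq_sub_sq_sum_div_card_of_binary _ hz,
    card_eq_card_filter_eq_one_add_card_filter_eq_zero_of_binary _ hz]
  simp only [giniImpurity, Finset.filter_filter, hone, hzero]
  push_cast
  split_ifs with h
  · simp [h]
  · ring

theorem giniLoss_eq_two_mul_mseLoss (m N : ℕ) (x : Fin m → ℕ) {y : Fin m → ℝ}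
    (hy : ∀ i, y i = 1 ∨ y i = -1) (j : ℕ) :
    giniLoss m N x y j = 2 * mseLoss m N x (fun i => (y i + 1) / 2) j := by
  rw [giniLoss_eq, mseLoss, giniImpurity_eq_two_mul_SSE m x hy, giniImpurity_eq_two_mul_SSE m x hy]
  ring

theorem Finset.inf'_const_mul {ι R : Type*} [Semiring R] [LinearOrder R] [PosMulMono R]
    {s : Finset ι} (hs : s.Nonempty) (f : ι → R) {c : R} (hc : 0 ≤ c) :
    s.inf' hs (fun i => c * f i) = c * s.inf' hs f :=
  (Finset.apply_inf'_eq_inf'_comp hs (c * ·) fun a b => mul_min_of_nonneg a b hc).symm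

theorem gini_eq_two_mse_general (m N : ℕ) (x : Fin m → ℕ) (y : Fin m → ℝ)
    (hy : ∀ i, y i = 1 ∨ y i = -1) :
    let z : Fin m → ℝ := fun i => (y i + 1) / 2
    let hne : (Finset.Icc 0 N).Nonempty := Finset.nonempty_Icc.mpr (Nat.zero_le N)
    (∀ j ≤ N, giniLoss m N x y j = 2 * mseLoss m N x z j) ∧
    (Finset.Icc 0 N).inf' hne (giniLoss m N x y)
      = 2 * (Finset.Icc 0 N).inf' hne (mseLoss m N x z) ∧
    (∀ j ∈ Finset.Icc 0 N,
      (giniLoss m N x y j = (Finset.Icc 0 N).inf' hne (giniLoss m N x y) ↔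
       mseLoss m N x z j = (Finset.Icc 0 N).inf' hne (mseLoss m N x z))) := by
  intro z hne
  have hloss : giniLoss m N x y = fun j => 2 * mseLoss m N x z j :=
    funext (giniLoss_eq_two_mul_mseLoss m N x hy)
  have hinf : (Finset.Icc 0 N).inf' hne (giniLoss m N x y)
      = 2 * (Finset.Icc 0 N).inf' hne (mseLoss m N x z) := by
    rw [hloss, Finset.inf'_const_mul hne _ zero_le_two]
  refine ⟨fun j _ => congrFun hloss j, hinf, fun j _ => ?_⟩
  rw [hinf, hloss, mul_right_inj' two_ne_zero]

/-- Re-encoding labels `y ∈ {-1,+1}` as `z = (y+1)/2 ∈ {0,1}`, for every split `j`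
we have `L_Gini(j) = 2·L_MSE(j)`; hence the minima agree up to the factor `2` and the
two objectives have the same minimizing splits. -/
theorem gini_eq_two_mse (m N : ℕ) (hm : 1 ≤ m) (x : Fin m → ℕ) (y : Fin m → ℝ)
    (hx : ∀ i, x i ∈ Finset.Icc 1 N) (hy : ∀ i, y i = 1 ∨ y i = -1) :
    let z : Fin m → ℝ := fun i => (y i + 1) / 2
    let hne : (Finset.Icc 0 N).Nonempty := Finset.nonempty_Icc.mpr (Nat.zero_le N)
    (∀ j ≤ N, giniLoss m N x y j = 2 * mseLoss m N x z j) ∧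
    (Finset.Icc 0 N).inf' hne (giniLoss m N x y)
      = 2 * (Finset.Icc 0 N).inf' hne (mseLoss m N x z) ∧
    (∀ j ∈ Finset.Icc 0 N,
      (giniLoss m N x y j = (Finset.Icc 0 N).inf' hne (giniLoss m N x y) ↔
       mseLoss m N x z j = (Finset.Icc 0 N).inf' hne (mseLoss m N x z))) :=
  gini_eq_two_mse_general m N x y hy
end

section
/- Fix τ ∈ (0,1), N ≥ 2, and a dataset of m items with feature values x_1,...,x_m ∈ {1,...,N}. Let K ≤ m be a natural number with K ≥ 4·(log N)/τ, and let σ be a uniformly random K-element subset of {1,...,m}. Then with probability at least 1 − 1/N², every interval (a, b] ⊆ {1,...,N} that contains the feature values of more than τ·m of the items contains x_i for some i ∈ σ. -/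
/-!
An interval holding `t > τ m` of the `m` items is missed by a uniform `K`-subset with
probability `C(m - t, K) / C(m, K) ≤ (1 - t/m)^K ≤ exp (-τ K) ≤ N⁻⁴`, the last step by the
choice of `K`. A union bound over the at most `N²` intervals `(a, b]` with `b ≤ N` leaves a
failure probability of at most `N⁻²`.
-/

open Finset Classical

theorem Nat.sub_sub_mul_le_sub_mul_sub (n s i : ℕ) : (n - s - i) * n ≤ (n - i) * (n - s) := by
  rcases le_or_gt (s + i) n with h | h
  · obtain ⟨a, rfl⟩ := Nat.exists_eq_add_of_le h
    rw [show s + i + a - s - i = a by omega, show s + i + a - i = s + a by omega,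
      show s + i + a - s = i + a by omega]
    nlinarith
  · simp [show n - s - i = 0 by omega]

theorem Nat.descFactorial_sub_mul_pow_le (n s k : ℕ) :
    (n - s).descFactorial k * n ^ k ≤ n.descFactorial k * (n - s) ^ k := by
  simp only [Nat.descFactorial_eq_prod_range]
  rw [pow_eq_prod_const, pow_eq_prod_const, ← prod_mul_distrib, ← prod_mul_distrib]
  exact prod_le_prod' fun i _ => Nat.sub_sub_mul_le_sub_mul_sub n s i

theorem Nat.choose_sub_mul_pow_le (n s k : ℕ) :
    (n - s).choose k * n ^ k ≤ n.choose k * (n - s) ^ k := by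
  have h := Nat.descFactorial_sub_mul_pow_le n s k
  simp only [Nat.descFactorial_eq_factorial_mul_choose, mul_assoc] at h
  exact Nat.le_of_mul_le_mul_left h k.factorial_pos

theorem Nat.choose_sub_le_choose_mul_exp {n s : ℕ} (hs : s ≤ n) (k : ℕ) :
    ((n - s).choose k : ℝ) ≤ n.choose k * Real.exp (-(k * s / n)) := by
  rcases Nat.eq_zero_or_pos n with rfl | hn
  · simp [Nat.le_zero.mp hs]
  have hn' : (0 : ℝ) < n := by exact_mod_cast hn
  have hratio : ((n - s : ℕ) : ℝ) / n = 1 - s / n := by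
    rw [Nat.cast_sub hs]; field_simp
  calc ((n - s).choose k : ℝ)
      ≤ n.choose k * (((n - s : ℕ) : ℝ) / n) ^ k := by
        rw [div_pow, mul_div_assoc', le_div_iff₀ (by positivity)]
        exact_mod_cast Nat.choose_sub_mul_pow_le n s k
    _ ≤ n.choose k * Real.exp (-(s / n)) ^ k := by
        gcongr
        rw [hratio]; exact Real.one_sub_le_exp_neg _
    _ = n.choose k * Real.exp (-(k * s / n)) := by
        rw [← Real.exp_nat_mul]; ring_nf

theorem Finset.card_filter_powersetCard_disjoint {α : Type*} [Fintype α] [DecidableEq α]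
    (T : Finset α) (k : ℕ) :
    #{σ ∈ powersetCard k univ | Disjoint σ T} = (Fintype.card α - #T).choose k := by
  rw [← card_compl, ← card_powersetCard]
  congr 1
  ext σ
  simp [mem_powersetCard, subset_compl_iff_disjoint_right, and_comm]

theorem Finset.card_filter_powersetCard_disjoint_le_of_lt {α : Type*} [Fintype α]
    [DecidableEq α] {T : Finset α} {τ : ℝ} (hT : τ * Fintype.card α < #T) (k : ℕ) :
    (#{σ ∈ powersetCard k univ | Disjoint σ T} : ℝ) ≤
      (Fintype.card α).choose k * Real.exp (-(τ * k)) := by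
  have hα : (0 : ℝ) < Fintype.card α := by
    rcases (Fintype.card α).eq_zero_or_pos with h | h
    · have hT0 : #T = 0 := Nat.le_zero.mp (h ▸ card_le_univ T)
      simp [h, hT0] at hT
    · exact_mod_cast h
  rw [card_filter_powersetCard_disjoint]
  calc _ ≤ (Fintype.card α).choose k * Real.exp (-(k * #T / Fintype.card α)) :=
        Nat.choose_sub_le_choose_mul_exp (card_le_univ T) k
    _ ≤ _ := by
        gcongr
        rw [mul_div_assoc, mul_comm]
        gcongr
        rw [le_div_iff₀ hα]
        exact hT.le

theorem Finset.card_filter_exists_le_card_mul {ι β R : Type*} [Semiring R] [PartialOrder R]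
    [IsOrderedRing R] (s : Finset β) (I : Finset ι) (P : ι → β → Prop)
    [∀ i, DecidablePred (P i)] [DecidablePred fun b => ∃ i ∈ I, P i b] {c : R}
    (h : ∀ i ∈ I, (#{b ∈ s | P i b} : R) ≤ c) :
    (#{b ∈ s | ∃ i ∈ I, P i b} : R) ≤ #I * c := by
  have hunion : {b ∈ s | ∃ i ∈ I, P i b} = I.biUnion fun i => {b ∈ s | P i b} := by
    ext b; simp only [mem_filter, mem_biUnion]; tauto
  calc (#{b ∈ s | ∃ i ∈ I, P i b} : R) ≤ ∑ i ∈ I, (#{b ∈ s | P i b} : R) := by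
        rw [hunion, ← Nat.cast_sum]; exact Nat.mono_cast card_biUnion_le
    _ ≤ #I * c := by
        rw [← nsmul_eq_mul]; exact sum_le_card_nsmul _ _ _ h

theorem Finset.one_sub_le_card_filter_div {α : Type*} {s : Finset α} (hs : s.Nonempty)
    {p : α → Prop} {ε : ℝ} (h : (#{a ∈ s | ¬p a} : ℝ) ≤ ε * #s) :
    1 - ε ≤ (#{a ∈ s | p a} : ℝ) / #s := by
  have hsplit := card_filter_add_card_filter_not (s := s) p
  have hs' : (0 : ℝ) < #s := by exact_mod_cast hs.card_pos
  rw [le_div_iff₀ hs']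
  have : (#{a ∈ s | p a} : ℝ) + #{a ∈ s | ¬p a} = #s := by exact_mod_cast hsplit
  linarith

theorem Real.exp_neg_mul_le_inv_pow_four {τ x K : ℝ} (hτ : 0 < τ) (hx : 0 < x)
    (hK : 4 * Real.log x / τ ≤ K) : Real.exp (-(τ * K)) ≤ (x ^ 4)⁻¹ := by
  rw [← Real.rpow_natCast, ← Real.rpow_neg hx.le, Real.rpow_def_of_pos hx]
  gcongr
  rw [div_le_iff₀ hτ] at hK
  push_cast
  linarith

def intervalItems {m : ℕ} (x : Fin m → ℕ) (p : ℕ × ℕ) : Finset (Fin m) :=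
  {i | p.1 < x i ∧ x i ≤ p.2}

theorem exists_heavy_disjoint_of_not_forall_hits {m N : ℕ} {x : Fin m → ℕ} {τ : ℝ}
    {σ : Finset (Fin m)}
    (h : ¬∀ a b : ℕ, a < b → b ≤ N → τ * m < (#{i | a < x i ∧ x i ≤ b} : ℝ) →
      ∃ i ∈ σ, a < x i ∧ x i ≤ b) :
    ∃ p ∈ range N ×ˢ Icc 1 N, τ * m < #(intervalItems x p) ∧ Disjoint σ (intervalItems x p) := by
  by_contra hnone
  refine h fun a b hab hbN hheavy => ?_
  by_contra hmissed
  refine hnone ⟨(a, b), ?_, hheavy, disjoint_left.mpr fun i hi hin => ?_⟩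
  · simp only [mem_product, mem_range, mem_Icc]
    omega
  · exact hmissed ⟨i, hi, by simpa [intervalItems] using hin⟩

theorem reservoir_hits_heavy_intervals_general (τ : ℝ) (hτ0 : 0 < τ)
    (N m K : ℕ) (hN : 2 ≤ N) (x : Fin m → ℕ)
    (hKm : K ≤ m) (hK : 4 * Real.log N / τ ≤ (K : ℝ)) :
    let Ω := (Finset.univ : Finset (Fin m)).powersetCard K
    let good := Ω.filter fun σ => ∀ a b : ℕ, a < b → b ≤ N →
      τ * m < ((Finset.univ.filter fun i => a < x i ∧ x i ≤ b).card : ℝ) →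
      ∃ i ∈ σ, a < x i ∧ x i ≤ b
    1 - 1 / (N : ℝ) ^ 2 ≤ (good.card : ℝ) / (Ω.card : ℝ) := by
  intro Ω good
  have hN0 : (0 : ℝ) < N := Nat.cast_pos.mpr (by omega)
  have hΩ : (#Ω : ℝ) = m.choose K := by simp [Ω, card_powersetCard]
  have hmiss : ∀ p ∈ range N ×ˢ Icc 1 N,
      (#{σ ∈ Ω | τ * m < #(intervalItems x p) ∧ Disjoint σ (intervalItems x p)} : ℝ) ≤
        #Ω * Real.exp (-(τ * K)) := by
    intro p _
    by_cases hheavy : τ * m < #(intervalItems x p)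
    · have := card_filter_powersetCard_disjoint_le_of_lt (T := intervalItems x p) (τ := τ)
        (by rwa [Fintype.card_fin]) K
      simpa [hheavy, hΩ] using this
    · simp only [hheavy, false_and, filter_false, card_empty, Nat.cast_zero]
      positivity
  refine one_sub_le_card_filter_div (powersetCard_nonempty.mpr (by simpa using hKm)) ?_
  calc _ ≤ (#{σ ∈ Ω | ∃ p ∈ range N ×ˢ Icc 1 N,
          τ * m < #(intervalItems x p) ∧ Disjoint σ (intervalItems x p)} : ℝ) := by
        gcongr with σ _
        exact exists_heavy_disjoint_of_not_forall_hits
    _ ≤ #(range N ×ˢ Icc 1 N) * (#Ω * Real.exp (-(τ * K))) :=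
        card_filter_exists_le_card_mul _ _
          (fun p σ => τ * m < #(intervalItems x p) ∧ Disjoint σ (intervalItems x p)) hmiss
    _ ≤ N ^ 2 * (#Ω * ((N : ℝ) ^ 4)⁻¹) := by
        gcongr
        · simp [sq]
        · exact Real.exp_neg_mul_le_inv_pow_four hτ0 hN0 hK
    _ = 1 / N ^ 2 * #Ω := by field_simp

/-- Reservoir sampling hits every heavy interval: if `σ` is a uniformly random `K`-element
subset of the `m` items with `K ≥ 4·(log N)/τ`, then with probability at least `1 − 1/N²`,
every interval `(a, b] ⊆ {1,…,N}` containing more than `τ·m` items contains the feature value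
of some sampled item. -/
theorem reservoir_hits_heavy_intervals (τ : ℝ) (hτ0 : 0 < τ) (hτ1 : τ < 1)
    (N m K : ℕ) (hN : 2 ≤ N) (x : Fin m → ℕ) (hx : ∀ i, x i ∈ Finset.Icc 1 N)
    (hKm : K ≤ m) (hK : 4 * Real.log N / τ ≤ (K : ℝ)) :
    let Ω := (Finset.univ : Finset (Fin m)).powersetCard K
    let good := Ω.filter fun σ => ∀ a b : ℕ, a < b → b ≤ N →
      τ * m < ((Finset.univ.filter fun i => a < x i ∧ x i ≤ b).card : ℝ) →
      ∃ i ∈ σ, a < x i ∧ x i ≤ b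
    1 - 1 / (N : ℝ) ^ 2 ≤ (good.card : ℝ) / (Ω.card : ℝ) :=
  reservoir_hits_heavy_intervals_general τ hτ0 N m K hN x hKm hK
end

section
/- Fix τ > 0 and M ≥ 0. Let P ⊆ {1,...,N} be a set of feature values such that every interval (a, b] ⊆ {1,...,N} containing the feature values of more than τ·m data points contains some element of P. Define the candidate set S = {0, N} ∪ {x : x ∈ P} ∪ {x − 1 : x ∈ P, x > 1}. Then there exists j ∈ S with L(j) ≤ OPT + τ·M², where OPT = min_{0 ≤ j ≤ N} L(j). -/
/-!
Let `j` be an optimal split and `k` the largest candidate with `k ≤ j` (`0` is a candidate).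
No point of `P` lies in `(k, j]`, so at most `τ·m` data points have their feature there.
Moving the split from `j` to `k` shrinks the left range, which cannot increase its SSE, and adds
these points to the right range; predicting them by the old right-hand mean costs at most `M²`
each, since labels and means lie in `[0, M]`.
-/

open Finset

open scoped BigOperators

section SumSqDev

variable {ι : Type*}

noncomputable def sumSqDev (s : Finset ι) (y : ι → ℝ) : ℝ :=
  ∑ i ∈ s, (y i - 𝔼 j ∈ s, y j) ^ 2

lemma sum_sq_sub_eq_sumSqDev_add (s : Finset ι) (y : ι → ℝ) (c : ℝ) :
    ∑ i ∈ s, (y i - c) ^ 2 = sumSqDev s y + #s * (𝔼 j ∈ s, y j - c) ^ 2 := by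
  rcases s.eq_empty_or_nonempty with rfl | hs
  · simp [sumSqDev]
  have hcard : (#s : ℝ) ≠ 0 := by exact_mod_cast hs.card_pos.ne'
  simp only [sumSqDev, expect_eq_sum_div_card, sub_sq, sum_add_distrib, sum_sub_distrib,
    ← sum_mul, ← mul_sum, sum_const, nsmul_eq_mul]
  field_simp
  ring

lemma sumSqDev_eq_sum_sq_sub_sq_sum_div (s : Finset ι) (y : ι → ℝ) :
    sumSqDev s y = ∑ i ∈ s, y i ^ 2 - (∑ i ∈ s, y i) ^ 2 / #s := by
  have h := sum_sq_sub_eq_sumSqDev_add s y 0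
  rcases s.eq_empty_or_nonempty with rfl | hs
  · simp [sumSqDev]
  have hcard : (#s : ℝ) ≠ 0 := by exact_mod_cast hs.card_pos.ne'
  simp only [sub_zero, expect_eq_sum_div_card] at h
  field_simp at h ⊢
  linarith

lemma sumSqDev_le_sum_sq_sub (s : Finset ι) (y : ι → ℝ) (c : ℝ) :
    sumSqDev s y ≤ ∑ i ∈ s, (y i - c) ^ 2 := by
  rw [sum_sq_sub_eq_sumSqDev_add]
  exact le_add_of_nonneg_right (by positivity)

lemma sumSqDev_mono (y : ι → ℝ) {s t : Finset ι} (hst : s ⊆ t) :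
    sumSqDev s y ≤ sumSqDev t y :=
  (sumSqDev_le_sum_sq_sub s y _).trans <|
    sum_le_sum_of_subset_of_nonneg hst fun _ _ _ ↦ sq_nonneg (_ : ℝ)

lemma sumSqDev_union_le [DecidableEq ι] {s e : Finset ι} (hd : Disjoint s e) {y : ι → ℝ} {M : ℝ}
    (hy : ∀ i ∈ s ∪ e, y i ∈ Set.Icc 0 M) :
    sumSqDev (s ∪ e) y ≤ sumSqDev s y + #e * M ^ 2 := by
  set c := 𝔼 j ∈ s, y j
  have hc₀ : 0 ≤ c := expect_nonneg fun i hi ↦ (hy i (mem_union_left e hi)).1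
  have hcM (hM : 0 ≤ M) : c ≤ M := by
    rcases s.eq_empty_or_nonempty with rfl | hs
    · simpa [c] using hM
    exact expect_le hs fun i hi ↦ (hy i (mem_union_left e hi)).2
  have he : ∀ i ∈ e, (y i - c) ^ 2 ≤ M ^ 2 := fun i hi ↦ by
    obtain ⟨hy₀, hyM⟩ := hy i (mem_union_right s hi)
    have := hcM (hy₀.trans hyM)
    exact sq_le_sq' (by linarith) (by linarith)
  calc sumSqDev (s ∪ e) y ≤ ∑ i ∈ s ∪ e, (y i - c) ^ 2 := sumSqDev_le_sum_sq_sub _ y c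
    _ = sumSqDev s y + ∑ i ∈ e, (y i - c) ^ 2 := sum_union hd
    _ ≤ sumSqDev s y + #e * M ^ 2 := by
      grw [sum_le_card_nsmul e _ _ he, nsmul_eq_mul]

end SumSqDev

section Splits

variable {m : ℕ} {x : Fin m → ℕ} {y : Fin m → ℝ}

lemma SSE_eq_sumSqDev (R : Finset ℕ) :
    SSE m x y R = sumSqDev (univ.filter fun i ↦ x i ∈ R) y := by
  rw [sumSqDev_eq_sum_sq_sub_sq_sum_div, SSE]
  split_ifs with h
  · rfl
  · simp [not_nonempty_iff_eq_empty.mp h]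

lemma SSE_Icc_one_mono {k j : ℕ} (hkj : k ≤ j) :
    SSE m x y (Icc 1 k) ≤ SSE m x y (Icc 1 j) := by
  simp only [SSE_eq_sumSqDev]
  exact sumSqDev_mono y <| monotone_filter_right _ fun _ _ ↦ (Icc_subset_Icc_right hkj ·)

lemma SSE_Icc_succ_le {k j N : ℕ} {M : ℝ} (hkj : k ≤ j) (hjN : j ≤ N)
    (hy : ∀ i, y i ∈ Set.Icc 0 M) :
    SSE m x y (Icc (k + 1) N) ≤
      SSE m x y (Icc (j + 1) N) + #(univ.filter fun i ↦ k < x i ∧ x i ≤ j) * M ^ 2 := by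
  have hsplit : univ.filter (fun i ↦ x i ∈ Icc (k + 1) N) =
      univ.filter (fun i ↦ x i ∈ Icc (j + 1) N) ∪ univ.filter fun i ↦ k < x i ∧ x i ≤ j := by
    ext i
    simp only [mem_filter, mem_union, mem_univ, true_and, mem_Icc]
    omega
  have hdisj : Disjoint (univ.filter fun i ↦ x i ∈ Icc (j + 1) N)
      (univ.filter fun i ↦ k < x i ∧ x i ≤ j) := by
    simp only [disjoint_filter, mem_Icc]
    omega
  simp only [SSE_eq_sumSqDev, hsplit]
  exact sumSqDev_union_le hdisj fun i _ ↦ hy i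

lemma L_le_L_add_card_mul_sq {N k j : ℕ} {M : ℝ} (hkj : k ≤ j) (hjN : j ≤ N)
    (hy : ∀ i, y i ∈ Set.Icc 0 M) :
    L m N x y k ≤
      L m N x y j + #(univ.filter fun i ↦ k < x i ∧ x i ≤ j) / m * M ^ 2 := by
  calc L m N x y k
      ≤ 1 / m * ((SSE m x y (Icc 1 j) + SSE m x y (Icc (j + 1) N)) +
          #(univ.filter fun i ↦ k < x i ∧ x i ≤ j) * M ^ 2) := by
        refine mul_le_mul_of_nonneg_left ?_ (by positivity)
        linarith [SSE_Icc_one_mono hkj (x := x) (y := y), SSE_Icc_succ_le hkj hjN hy (x := x)]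
    _ = L m N x y j + #(univ.filter fun i ↦ k < x i ∧ x i ≤ j) / m * M ^ 2 := by
        rw [L]
        ring

end Splits

theorem candidate_quality_general (m N : ℕ) (τ M : ℝ) (hτ : 0 < τ)
    (x : Fin m → ℕ) (y : Fin m → ℝ)
    (hy : ∀ i, y i ∈ Set.Icc (0 : ℝ) M)
    (P : Finset ℕ)
    (hcover : ∀ a b : ℕ, a < b → b ≤ N →
      τ * m < ((Finset.univ.filter fun i => a < x i ∧ x i ≤ b).card : ℝ) →
      ∃ p ∈ P, a < p ∧ p ≤ b) :
    ∃ j ∈ ({0, N} : Finset ℕ) ∪ P ∪ (P.filter fun p => 1 < p).image (fun p => p - 1),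
      L m N x y j ≤
        (Finset.Icc 0 N).inf' (Finset.nonempty_Icc.mpr (Nat.zero_le N)) (L m N x y)
        + τ * M ^ 2 := by
  set S := ({0, N} : Finset ℕ) ∪ P ∪ (P.filter fun p => 1 < p).image (fun p => p - 1)
  obtain ⟨j, hj, hjopt⟩ := exists_mem_eq_inf' (nonempty_Icc.mpr (Nat.zero_le N)) (L m N x y)
  have hjN : j ≤ N := (mem_Icc.mp hj).2
  obtain ⟨k, hk, hkmax⟩ := (S.filter (· ≤ j)).exists_max_image id ⟨0, by simp [S]⟩
  obtain ⟨hkS, hkj⟩ := mem_filter.mp hk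
  have hgap : #(univ.filter fun i ↦ k < x i ∧ x i ≤ j) ≤ τ * m := by
    by_contra! hmany
    obtain ⟨i, hi⟩ : (univ.filter fun i ↦ k < x i ∧ x i ≤ j).Nonempty := by
      rw [← card_pos, ← Nat.cast_pos (α := ℝ)]
      exact (by positivity : 0 ≤ τ * m).trans_lt hmany
    have hkj_lt : k < j := by have := (mem_filter.mp hi).2; omega
    obtain ⟨p, hp, hkp, hpj⟩ := hcover k j hkj_lt hjN hmany
    exact (hkmax p (mem_filter.mpr ⟨by simp [S, hp], hpj⟩)).not_gt hkp
  refine ⟨k, hkS, (L_le_L_add_card_mul_sq hkj hjN hy).trans ?_⟩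
  rw [hjopt]
  gcongr
  exact div_le_of_le_mul₀ (Nat.cast_nonneg m) hτ.le hgap

/-- Candidate quality: if `P ⊆ {1,…,N}` hits every interval `(a,b]` containing more than
`τ·m` data points, then the candidate set `S = {0, N} ∪ P ∪ {p − 1 : p ∈ P, p > 1}` contains
a split `j` with `L(j) ≤ OPT + τ·M²`. -/
theorem candidate_quality (m N : ℕ) (hm : 1 ≤ m) (τ M : ℝ) (hτ : 0 < τ) (hM : 0 ≤ M)
    (x : Fin m → ℕ) (y : Fin m → ℝ)
    (hx : ∀ i, x i ∈ Finset.Icc 1 N) (hy : ∀ i, y i ∈ Set.Icc (0 : ℝ) M)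
    (P : Finset ℕ) (hP : P ⊆ Finset.Icc 1 N)
    (hcover : ∀ a b : ℕ, a < b → b ≤ N →
      τ * m < ((Finset.univ.filter fun i => a < x i ∧ x i ≤ b).card : ℝ) →
      ∃ p ∈ P, a < p ∧ p ≤ b) :
    ∃ j ∈ ({0, N} : Finset ℕ) ∪ P ∪ (P.filter fun p => 1 < p).image (fun p => p - 1),
      L m N x y j ≤
        (Finset.Icc 0 N).inf' (Finset.nonempty_Icc.mpr (Nat.zero_le N)) (L m N x y)
        + τ * M ^ 2 :=
  candidate_quality_general m N τ M hτ x y hy P hcover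
end

section
/- In the classification lower-bound construction, for every split j ∈ {0,1,...,N} with j ∉ {2i−1, 2i}, the misclassification loss satisfies L_mis(j) ≥ 4/9. -/
/-! The `4n²` points `(2i−1, −1)` and the `4n²` points `(2i+1, +1)` lie on the same side of
every split `j ∉ {2i−1, 2i}`, so that side misclassifies at least `4n²` of the `9n²` points. -/

open Finset Classical

/-- Number of data points with feature value in the range `R` and label `v`. -/
noncomputable def fcount (data : Multiset (ℕ × ℝ)) (v : ℝ) (R : Finset ℕ) : ℕ :=
  Multiset.card (data.filter fun p => p.1 ∈ R ∧ p.2 = v)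

/-- Misclassification loss of split `j ∈ {0,…,N}`. -/
noncomputable def Lmis (N : ℕ) (data : Multiset (ℕ × ℝ)) (j : ℕ) : ℝ :=
  (1 / (Multiset.card data : ℝ)) *
    (((min (fcount data (-1) (Finset.Icc 1 j)) (fcount data 1 (Finset.Icc 1 j)) : ℕ) : ℝ) +
     ((min (fcount data (-1) (Finset.Icc (j + 1) N))
         (fcount data 1 (Finset.Icc (j + 1) N)) : ℕ) : ℝ))

/-- The classification lower-bound dataset: for each `k ∈ {1,…,n}`, `B = n` copies of
`(2k, s_k)` with `s_k = +1` if `z_k = 1` and `s_k = −1` if `z_k = 0`; `T = 4n²` copies of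
`(2i−1, −1)`; and `T` copies of `(2i+1, +1)`. -/
noncomputable def classData (n i : ℕ) (z : ℕ → ℕ) : Multiset (ℕ × ℝ) :=
  (∑ k ∈ Finset.Icc 1 n, Multiset.replicate n (2 * k, if z k = 1 then (1 : ℝ) else -1))
  + Multiset.replicate (4 * n ^ 2) (2 * i - 1, (-1 : ℝ))
  + Multiset.replicate (4 * n ^ 2) (2 * i + 1, (1 : ℝ))

section fcount

variable {data data' : Multiset (ℕ × ℝ)} {v : ℝ} {R : Finset ℕ}

lemma fcount_mono (h : data ≤ data') : fcount data v R ≤ fcount data' v R :=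
  Multiset.card_le_card (Multiset.filter_le_filter _ h)

lemma fcount_replicate {x : ℕ} (t : ℕ) (hx : x ∈ R) :
    fcount (Multiset.replicate t (x, v)) v R = t := by
  rw [fcount, Multiset.filter_eq_self.mpr, Multiset.card_replicate]
  intro p hp
  rw [Multiset.eq_of_mem_replicate hp]
  exact ⟨hx, rfl⟩

lemma le_fcount_of_replicate_le {x t : ℕ} (hx : x ∈ R)
    (h : Multiset.replicate t (x, v) ≤ data) : t ≤ fcount data v R :=
  (fcount_replicate t hx).symm.le.trans (fcount_mono h)

lemma Lmis_eq_div (N : ℕ) (data : Multiset (ℕ × ℝ)) (j : ℕ) :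
    Lmis N data j =
      ((min (fcount data (-1) (Icc 1 j)) (fcount data 1 (Icc 1 j)) +
        min (fcount data (-1) (Icc (j + 1) N)) (fcount data 1 (Icc (j + 1) N)) : ℕ) : ℝ) /
      Multiset.card data := by
  rw [Lmis, one_div_mul_eq_div, Nat.cast_add]

end fcount

section classData

variable (n i : ℕ) (z : ℕ → ℕ)

lemma card_classData : Multiset.card (classData n i z) = 9 * n ^ 2 := by
  simp only [classData, Multiset.card_add, Multiset.card_sum, Multiset.card_replicate,
    sum_const, Nat.card_Icc, Nat.add_sub_cancel, smul_eq_mul]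
  ring

lemma le_min_fcount_classData {R : Finset ℕ} (hneg : 2 * i - 1 ∈ R) (hpos : 2 * i + 1 ∈ R) :
    4 * n ^ 2 ≤ min (fcount (classData n i z) (-1) R) (fcount (classData n i z) 1 R) :=
  le_min
    (le_fcount_of_replicate_le hneg ((Multiset.le_add_left _ _).trans (Multiset.le_add_right _ _)))
    (le_fcount_of_replicate_le hpos (Multiset.le_add_left _ _))

end classData

theorem cls_far_splits_loss_general (n : ℕ) (i : ℕ) (hi : i ∈ Finset.Icc 1 n)
    (z : ℕ → ℕ)
    (j : ℕ) (hj1 : j ≠ 2 * i - 1) (hj2 : j ≠ 2 * i) :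
    (4 : ℝ) / 9 ≤ Lmis (2 * n + 1) (classData n i z) j := by
  obtain ⟨hi1, hin⟩ := mem_Icc.mp hi
  have hT : 4 * n ^ 2 ≤
      min (fcount (classData n i z) (-1) (Icc 1 j)) (fcount (classData n i z) 1 (Icc 1 j)) +
      min (fcount (classData n i z) (-1) (Icc (j + 1) (2 * n + 1)))
        (fcount (classData n i z) 1 (Icc (j + 1) (2 * n + 1))) := by
    rcases lt_or_gt_of_ne hj1 with hlt | hgt
    · refine (le_min_fcount_classData n i z ?_ ?_).trans (Nat.le_add_left _ _) <;>
        exact mem_Icc.mpr ⟨by omega, by omega⟩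
    · refine (le_min_fcount_classData n i z ?_ ?_).trans (Nat.le_add_right _ _) <;>
        exact mem_Icc.mpr ⟨by omega, by omega⟩
  have hm : (0 : ℝ) < 9 * n ^ 2 := by
    have : (0 : ℝ) < n := by exact_mod_cast hi1.trans hin
    positivity
  rw [Lmis_eq_div, card_classData, Nat.cast_mul, Nat.cast_pow, Nat.cast_ofNat, le_div_iff₀ hm]
  calc (4 : ℝ) / 9 * (9 * n ^ 2) = ((4 * n ^ 2 : ℕ) : ℝ) := by push_cast; ring
    _ ≤ _ := Nat.cast_le.mpr hT

/-- In the classification lower-bound construction, every split `j ∉ {2i−1, 2i}` has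
misclassification loss at least `4/9`. -/
theorem cls_far_splits_loss (n : ℕ) (hn : 1 ≤ n) (i : ℕ) (hi : i ∈ Finset.Icc 1 n)
    (z : ℕ → ℕ) (hz : ∀ k, z k = 0 ∨ z k = 1)
    (j : ℕ) (hj : j ≤ 2 * n + 1) (hj1 : j ≠ 2 * i - 1) (hj2 : j ≠ 2 * i) :
    (4 : ℝ) / 9 ≤ Lmis (2 * n + 1) (classData n i z) j :=
  cls_far_splits_loss_general n i hi z j hj1 hj2
end
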